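/- Let d₁, d₂ ≥ 1, and let L be a Latin square of order d₁d₂ on Z_{d₁d₂}. Let f : Z_{d₁} × Z_{d₂} → Z_{d₁d₂} be the bijection f(x,y) = d₂x + y, and set ω_r = exp(2πi/r). For n ∈ Z_{d₁}, m ∈ Z_{d₂}, l ∈ Z_{d₁d₂}, define |φ_{n,m,l}⟩ = (1/√(d₁d₂)) Σ_{i∈Z_{d₁}} Σ_{j∈Z_{d₂}} ω_{d₁}^{ni} ω_{d₂}^{mj} |i⟩ ⊗ |j⟩ ⊗ |L(l, f(i,j))⟩. Then the d₁²d₂² vectors {|φ_{n,m,l}⟩} form an orthonormal basis of C^{d₁} ⊗ C^{d₂} ⊗ C^{d₁d₂}. -/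

import Mathlib

/-!
Up to normalisation, `φ_{n,m,l}` is the character `(i, j) ↦ ω_{d₁}^{ni} ω_{d₂}^{mj}` of
`Z_{d₁} × Z_{d₂}` spread along the graph `(i, j) ↦ L(l, f(i,j))`. Two distinct rows of a Latin
square differ in every column, so for `l ≠ l'` the graphs are disjoint and the vectors orthogonal;
for `l = l'` the inner product is that of two characters, i.e. `δ_{nn'} δ_{mm'}`. Orthonormal
vectors are independent, and there are `d₁²d₂²` of them, the dimension of the space.
-/

open Complex

/-- The vector `|φ_{n,m,l}⟩` in `C^{d₁} ⊗ C^{d₂} ⊗ C^{d₁d₂}` built from a Latin square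
`L` of order `d₁d₂`, with `f(i,j) = d₂·i + j`: its component at `|i⟩⊗|j⟩⊗|r⟩` is
`(1/√(d₁d₂))·ω_{d₁}^{ni}·ω_{d₂}^{mj}·[L(l,f(i,j)) = r]`. -/
noncomputable def phiVec2 (d₁ d₂ : ℕ) [NeZero d₁] [NeZero d₂] [NeZero (d₁ * d₂)]
    (L : ZMod (d₁ * d₂) → ZMod (d₁ * d₂) → ZMod (d₁ * d₂))
    (nml : ZMod d₁ × ZMod d₂ × ZMod (d₁ * d₂)) :
    EuclideanSpace ℂ (ZMod d₁ × ZMod d₂ × ZMod (d₁ * d₂)) :=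
  WithLp.toLp 2 fun ijr : ZMod d₁ × ZMod d₂ × ZMod (d₁ * d₂) =>
    ((Real.sqrt (d₁ * d₂) : ℂ))⁻¹ *
      Complex.exp (2 * Real.pi * Complex.I / d₁) ^ (nml.1.val * ijr.1.val) *
      Complex.exp (2 * Real.pi * Complex.I / d₂) ^ (nml.2.1.val * ijr.2.1.val) *
      (if L nml.2.2 (((d₂ * ijr.1.val + ijr.2.1.val : ℕ)) : ZMod (d₁ * d₂)) = ijr.2.2
        then 1 else 0)

theorem exp_pow_val_mul_val_eq_stdAddChar (d : ℕ) [NeZero d] (a b : ZMod d) :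
    exp (2 * Real.pi * I / d) ^ (a.val * b.val) = ZMod.stdAddChar (a * b) := by
  have hab : a * b = ((a.val * b.val : ℕ) : ZMod d) := by simp
  rw [← exp_nat_mul, hab, ZMod.stdAddChar_apply, ZMod.toCircle_natCast]
  congr 1
  push_cast
  ring

theorem sum_conj_stdAddChar_mul_stdAddChar (d : ℕ) [NeZero d] (n n' : ZMod d) :
    ∑ i, starRingEnd ℂ (ZMod.stdAddChar (n * i)) * ZMod.stdAddChar (n' * i) =
      if n = n' then (d : ℂ) else 0 := by
  have hshift : ∀ i, starRingEnd ℂ (ZMod.stdAddChar (n * i)) * ZMod.stdAddChar (n' * i) =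
      ZMod.stdAddChar (i * (n' - n)) := fun i => by
    rw [← AddChar.map_neg_eq_conj, ← AddChar.map_add_eq_mul]
    ring_nf
  simp only [hshift, AddChar.sum_mulShift _ (ZMod.isPrimitive_stdAddChar d), sub_eq_zero,
    ZMod.card, eq_comm, apply_ite Nat.cast, Nat.cast_zero]

noncomputable def stdAddCharVec (d : ℕ) [NeZero d] (n : ZMod d) : EuclideanSpace ℂ (ZMod d) :=
  WithLp.toLp 2 fun i => (Real.sqrt d : ℂ)⁻¹ * ZMod.stdAddChar (n * i)

theorem orthonormal_stdAddCharVec (d : ℕ) [NeZero d] : Orthonormal ℂ (stdAddCharVec d) := by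
  rw [orthonormal_iff_ite]
  intro n n'
  have hd : (Real.sqrt d : ℂ)⁻¹ * (Real.sqrt d : ℂ)⁻¹ * d = 1 := by
    rw [← mul_inv, ← ofReal_mul, Real.mul_self_sqrt d.cast_nonneg, ofReal_natCast,
      inv_mul_cancel₀ (by exact_mod_cast NeZero.ne d)]
  calc inner ℂ (stdAddCharVec d n) (stdAddCharVec d n')
      = (Real.sqrt d : ℂ)⁻¹ * (Real.sqrt d : ℂ)⁻¹ *
          ∑ i, starRingEnd ℂ (ZMod.stdAddChar (n * i)) * ZMod.stdAddChar (n' * i) := by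
        simp only [stdAddCharVec, PiLp.inner_apply, RCLike.inner_apply', map_mul, map_inv₀,
          conj_ofReal, Finset.mul_sum]
        exact Finset.sum_congr rfl fun i _ => by ring
    _ = if n = n' then 1 else 0 := by
        rw [sum_conj_stdAddChar_mul_stdAddChar, mul_ite, hd, mul_zero]

section TensorOnGraph

variable {K₁ K₂ Λ I₁ I₂ R : Type*} [Fintype I₁] [Fintype I₂] [Fintype R] [DecidableEq R]

noncomputable def tensorOnGraph (g₁ : K₁ → EuclideanSpace ℂ I₁) (g₂ : K₂ → EuclideanSpace ℂ I₂)
    (σ : Λ → I₁ → I₂ → R) (k : K₁ × K₂ × Λ) : EuclideanSpace ℂ (I₁ × I₂ × R) :=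
  WithLp.toLp 2 fun x => g₁ k.1 x.1 * g₂ k.2.1 x.2.1 * if σ k.2.2 x.1 x.2.1 = x.2.2 then 1 else 0

theorem inner_tensorOnGraph (g₁ : K₁ → EuclideanSpace ℂ I₁) (g₂ : K₂ → EuclideanSpace ℂ I₂)
    (σ : Λ → I₁ → I₂ → R) (n n' : K₁) (m m' : K₂) (l l' : Λ) :
    inner ℂ (tensorOnGraph g₁ g₂ σ (n, m, l)) (tensorOnGraph g₁ g₂ σ (n', m', l')) =
      ∑ i, ∑ j, if σ l i j = σ l' i j then
        (starRingEnd ℂ (g₁ n i) * g₁ n' i) * (starRingEnd ℂ (g₂ m j) * g₂ m' j) else 0 := by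
  simp only [tensorOnGraph, PiLp.inner_apply, RCLike.inner_apply', Fintype.sum_prod_type, map_mul,
    apply_ite (starRingEnd ℂ), map_zero, mul_ite, ite_mul, mul_one, mul_zero, zero_mul,
    Finset.sum_ite_eq, Finset.mem_univ, if_true]
  refine Finset.sum_congr rfl fun i _ => Finset.sum_congr rfl fun j _ => ?_
  split_ifs <;> ring

theorem orthonormal_tensorOnGraph {g₁ : K₁ → EuclideanSpace ℂ I₁} {g₂ : K₂ → EuclideanSpace ℂ I₂}
    (h₁ : Orthonormal ℂ g₁) (h₂ : Orthonormal ℂ g₂) {σ : Λ → I₁ → I₂ → R}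
    (hσ : ∀ i j, Function.Injective fun l => σ l i j) :
    Orthonormal ℂ (tensorOnGraph g₁ g₂ σ) := by
  classical
  rw [orthonormal_iff_ite] at h₁ h₂ ⊢
  simp only [PiLp.inner_apply, RCLike.inner_apply'] at h₁ h₂
  rintro ⟨n, m, l⟩ ⟨n', m', l'⟩
  rw [inner_tensorOnGraph]
  by_cases hl : l = l'
  · subst hl
    simp only [if_true, ← Fintype.sum_mul_sum, h₁, h₂, Prod.mk.injEq, and_true, ite_and, ite_mul,
      one_mul, zero_mul]
  · have hgraph : ∀ i j, σ l i j ≠ σ l' i j := fun i j h => hl (hσ i j h)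
    simp [hgraph, hl]

end TensorOnGraph

theorem phiVec2_eq_tensorOnGraph (d₁ d₂ : ℕ) [NeZero d₁] [NeZero d₂] [NeZero (d₁ * d₂)]
    (L : ZMod (d₁ * d₂) → ZMod (d₁ * d₂) → ZMod (d₁ * d₂)) :
    phiVec2 d₁ d₂ L = tensorOnGraph (stdAddCharVec d₁) (stdAddCharVec d₂)
      (fun l i j => L l ((d₂ * i.val + j.val : ℕ) : ZMod (d₁ * d₂))) := by
  funext k
  ext x
  simp only [phiVec2, tensorOnGraph, stdAddCharVec, exp_pow_val_mul_val_eq_stdAddChar,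
    Real.sqrt_mul (Nat.cast_nonneg d₁), ofReal_mul, mul_inv]
  ring

theorem phiVec2_orthonormal_basis_general (d₁ d₂ : ℕ) [NeZero d₁] [NeZero d₂] [NeZero (d₁ * d₂)]
    (L : ZMod (d₁ * d₂) → ZMod (d₁ * d₂) → ZMod (d₁ * d₂))
    (hcol : ∀ c, Function.Bijective fun l => L l c) :
    Orthonormal ℂ (phiVec2 d₁ d₂ L) ∧
      Submodule.span ℂ (Set.range (phiVec2 d₁ d₂ L)) = ⊤ := by
  have horth : Orthonormal ℂ (phiVec2 d₁ d₂ L) := by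
    rw [phiVec2_eq_tensorOnGraph]
    exact orthonormal_tensorOnGraph (orthonormal_stdAddCharVec d₁) (orthonormal_stdAddCharVec d₂)
      fun _ _ => (hcol _).injective
  exact ⟨horth, horth.linearIndependent.span_eq_top_of_card_eq_finrank finrank_euclideanSpace.symm⟩

/-- For `d₁, d₂ ≥ 1` and a Latin square `L` of order `d₁d₂`, the
`d₁²d₂²` vectors `|φ_{n,m,l}⟩` form an orthonormal basis of
`C^{d₁} ⊗ C^{d₂} ⊗ C^{d₁d₂}`. -/
theorem phiVec2_orthonormal_basis (d₁ d₂ : ℕ) [NeZero d₁] [NeZero d₂] [NeZero (d₁ * d₂)]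
    (L : ZMod (d₁ * d₂) → ZMod (d₁ * d₂) → ZMod (d₁ * d₂))
    (hrow : ∀ l, Function.Bijective (L l))
    (hcol : ∀ c, Function.Bijective fun l => L l c) :
    Orthonormal ℂ (phiVec2 d₁ d₂ L) ∧
      Submodule.span ℂ (Set.range (phiVec2 d₁ d₂ L)) = ⊤ :=
  phiVec2_orthonormal_basis_general d₁ d₂ L hcol
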